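/- arXiv:2407.02134 — 2 statements merged into one kernel-verified Lean document; each statement's English description precedes it below -/
import Mathlib

section
/- Let M be a commutative idempotent monoid acting additively on a torsion-free abelian group G (i.e. k·g = 0 for a positive integer k implies g = 0), F : M → G a function satisfying the chain rule, and X_1, …, X_n, Y ∈ M. Then the following are equivalent: (1) X_1, …, X_n are mutually F-independent given Y; (2) Y.TC_F(X_1; …; X_n) = 0; (3) (Y·X_{[n]∖I}).TC_F(;_{i∈I} X_i) = 0 for all nonempty I ⊆ [n]. -/
namespace AMRF
/-- An additive monoid action of a commutative monoid `M` on an abelian group `G`. -/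
structure MAction (M G : Type*) [CommMonoid M] [AddCommGroup G] where
  act : M → G → G
  act_one : ∀ g, act 1 g = g
  act_mul : ∀ X Y g, act X (act Y g) = act (X * Y) g
  act_add : ∀ X g h, act X (g + h) = act X g + act X h

variable {M G : Type*} [CommMonoid M] [AddCommGroup G]

/-- `F : M → G` satisfies the chain rule `F(XY) = F(X) + X.F(Y)`. -/
def ChainRule (A : MAction M G) (F : M → G) : Prop :=
  ∀ X Y : M, F (X * Y) = F X + A.act X (F Y)

/-- Higher-order terms on a *reversed* argument list: the head of the list is the *last*
argument `Y_q` in `F_q(Y₁; …; Y_q)`. -/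
def Fseq (A : MAction M G) (F : M → G) : List M → G
  | [] => 0
  | [Y] => F Y
  | Y :: Z :: l => Fseq A F (Z :: l) - A.act Y (Fseq A F (Z :: l))

/-- `Fof A F [Y₁, …, Y_q] = F_q(Y₁; …; Y_q)`, defined inductively by
`F_q(Y₁; …; Y_q) = F_{q−1}(Y₁; …; Y_{q−1}) − Y_q.F_{q−1}(Y₁; …; Y_{q−1})`. -/
def Fof (A : MAction M G) (F : M → G) (l : List M) : G :=
  Fseq A F l.reverse

/-- The interaction term `F(;_{i∈I} X_i)`, with arguments in increasing index order. -/
def Fint (A : MAction M G) (F : M → G) {ι : Type*} [LinearOrder ι] (X : ι → M)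
    (I : Finset ι) : G :=
  Fof A F ((I.sort (· ≤ ·)).map X)

/-- The `F`-independence relation: `X ⊥_F Y | Z` iff `Z.F(X; Y) = 0`, where
`F(X; Y) = F(X) − Y.F(X)` is the second-order term. -/
def Findep (A : MAction M G) (F : M → G) (X Y Z : M) : Prop :=
  A.act Z (F X - A.act Y (F X)) = 0

/-- The `F`-total correlation `TC_F(;_{l∈L} X_l) = Σ_{l∈L} F(X_l) − F(X_L)`. -/
def TC (F : M → G) {ι : Type*} (X : ι → M) (L : Finset ι) : G :=
  (∑ l ∈ L, F (X l)) - F (∏ l ∈ L, X l)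

/-! ### Auxiliary lemmas -/

/-- The action of a fixed monoid element, as an additive group homomorphism. -/
def MAction.hom (A : MAction M G) (Z : M) : G →+ G where
  toFun := A.act Z
  map_zero' := by
    have h := A.act_add Z 0 0
    rw [add_zero] at h
    exact (left_eq_add.mp h)
  map_add' := A.act_add Z

@[simp] theorem MAction.hom_apply (A : MAction M G) (Z : M) (g : G) :
    A.hom Z g = A.act Z g := rfl

theorem F_one' (A : MAction M G) (F : M → G) (hF : ChainRule A F) : F 1 = 0 := by
  have h := hF 1 1
  rw [one_mul, A.act_one] at h
  exact (left_eq_add.mp h)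

theorem prod_mem_idem {ι : Type*} [DecidableEq ι] (hidem : ∀ x : M, x * x = x)
    (X : ι → M) {a : ι} {S : Finset ι} (ha : a ∈ S) :
    X a * ∏ i ∈ S, X i = ∏ i ∈ S, X i := by
  rw [← Finset.mul_prod_erase S X ha, ← mul_assoc, hidem]

theorem prod_union_idem {ι : Type*} [DecidableEq ι] (hidem : ∀ x : M, x * x = x)
    (X : ι → M) (K S : Finset ι) :
    (∏ i ∈ K, X i) * ∏ i ∈ S, X i = ∏ i ∈ K ∪ S, X i := by
  induction K using Finset.induction_on with
  | empty => simp
  | @insert a K ha ih =>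
    rw [Finset.prod_insert ha, mul_assoc, ih, Finset.insert_union]
    by_cases h : a ∈ K ∪ S
    · rw [Finset.insert_eq_self.mpr h, prod_mem_idem hidem X h]
    · rw [Finset.prod_insert h]

theorem act_prod_F {ι : Type*} [DecidableEq ι] (A : MAction M G) (F : M → G)
    (hF : ChainRule A F) (hidem : ∀ x : M, x * x = x) (X : ι → M) (K S : Finset ι) :
    A.act (∏ i ∈ K, X i) (F (∏ i ∈ S, X i)) = F (∏ i ∈ K ∪ S, X i) - F (∏ i ∈ K, X i) := by
  have h := hF (∏ i ∈ K, X i) (∏ i ∈ S, X i)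
  rw [prod_union_idem hidem X K S] at h
  rw [h]; abel

theorem claim_down {G : Type*} [AddCommGroup G] {n : ℕ}
    (htf : ∀ (k : ℕ) (g : G), 0 < k → k • g = 0 → g = 0)
    (f : Finset (Fin n) → G)
    (hstep : ∀ (S : Finset (Fin n)) (i : Fin n), i ∈ S → f (S ∪ {i}) = f S)
    (hH : ∀ K : Finset (Fin n),
      (∑ i : Fin n, (f (K ∪ {i}) - f K)) = f Finset.univ - f K) :
    ∀ S : Finset (Fin n), f Finset.univ - f S
      = ∑ k ∈ Finset.univ \ S, (f Finset.univ - f (Finset.univ.erase k)) := by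
  classical
  suffices h : ∀ (m : ℕ) (S : Finset (Fin n)), (Finset.univ \ S).card = m →
      f Finset.univ - f S
        = ∑ k ∈ Finset.univ \ S, (f Finset.univ - f (Finset.univ.erase k)) by
    exact fun S => h _ S rfl
  intro m
  induction m using Nat.strong_induction_on with
  | _ m ih =>
  intro S hS
  rcases m with _ | m
  · have h0 : Finset.univ \ S = ∅ := Finset.card_eq_zero.mp hS
    have hSu : S = Finset.univ :=
      Finset.univ_subset_iff.mp (Finset.sdiff_eq_empty_iff_subset.mp h0)
    rw [h0, hSu, Finset.sum_empty, sub_self]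
  rcases m with _ | m
  · obtain ⟨a, ha⟩ := Finset.card_eq_one.mp hS
    have h1 : Finset.univ \ (Finset.univ \ S) = S := by
      rw [Finset.sdiff_sdiff_self_left, Finset.univ_inter]
    rw [ha] at h1
    have hSa : S = Finset.univ.erase a := by
      rw [← h1, Finset.erase_eq]
    rw [ha, Finset.sum_singleton, hSa]
  · -- card = m + 2
    have hsum : ∑ i ∈ Finset.univ \ S, (f (S ∪ {i}) - f S) = f Finset.univ - f S := by
      rw [← hH S]
      apply Finset.sum_subset (Finset.subset_univ _)
      intro x _ hx
      have hxS : x ∈ S := by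
        by_contra hc
        exact hx (Finset.mem_sdiff.mpr ⟨Finset.mem_univ x, hc⟩)
      rw [hstep S x hxS, sub_self]
    have hterm : ∀ i ∈ Finset.univ \ S, f (S ∪ {i}) - f S
        = (f Finset.univ - f S)
          - ((∑ k ∈ Finset.univ \ S, (f Finset.univ - f (Finset.univ.erase k)))
              - (f Finset.univ - f (Finset.univ.erase i))) := by
      intro i hi
      have hcompl : Finset.univ \ (S ∪ {i}) = (Finset.univ \ S).erase i := by
        ext x
        simp only [Finset.mem_sdiff, Finset.mem_union, Finset.mem_erase,
          Finset.mem_univ, Finset.mem_singleton, true_and]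
        tauto
      have hcard : (Finset.univ \ (S ∪ {i})).card = m + 1 := by
        rw [hcompl, Finset.card_erase_of_mem hi, hS]; omega
      have hIH := ih (m + 1) (by omega) (S ∪ {i}) hcard
      rw [hcompl, Finset.sum_erase_eq_sub hi] at hIH
      rw [← hIH]
      abel
    have hfin : ∑ i ∈ Finset.univ \ S, ((f Finset.univ - f S)
          - ((∑ k ∈ Finset.univ \ S, (f Finset.univ - f (Finset.univ.erase k)))
              - (f Finset.univ - f (Finset.univ.erase i))))
        = f Finset.univ - f S := (Finset.sum_congr rfl hterm).symm.trans hsum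
    have hsplit : ∑ i ∈ Finset.univ \ S, ((f Finset.univ - f S)
          - ((∑ k ∈ Finset.univ \ S, (f Finset.univ - f (Finset.univ.erase k)))
              - (f Finset.univ - f (Finset.univ.erase i))))
        = (Finset.univ \ S).card •
            ((f Finset.univ - f S)
              - ∑ k ∈ Finset.univ \ S, (f Finset.univ - f (Finset.univ.erase k)))
          + ∑ k ∈ Finset.univ \ S, (f Finset.univ - f (Finset.univ.erase k)) := by
      have e : ∀ i ∈ Finset.univ \ S, (f Finset.univ - f S)
          - ((∑ k ∈ Finset.univ \ S, (f Finset.univ - f (Finset.univ.erase k)))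
              - (f Finset.univ - f (Finset.univ.erase i)))
          = ((f Finset.univ - f S)
              - ∑ k ∈ Finset.univ \ S, (f Finset.univ - f (Finset.univ.erase k)))
            + (f Finset.univ - f (Finset.univ.erase i)) := by
        intro i _; abel
      rw [Finset.sum_congr rfl e, Finset.sum_add_distrib, Finset.sum_const]
    rw [hsplit, hS] at hfin
    have hv : (m + 1 + 1) • ((f Finset.univ - f S)
          - ∑ k ∈ Finset.univ \ S, (f Finset.univ - f (Finset.univ.erase k)))
        = (f Finset.univ - f S)
          - ∑ k ∈ Finset.univ \ S, (f Finset.univ - f (Finset.univ.erase k)) := by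
      have h2 := eq_sub_of_add_eq hfin
      rw [h2]
    have hz : (m + 1) • ((f Finset.univ - f S)
          - ∑ k ∈ Finset.univ \ S, (f Finset.univ - f (Finset.univ.erase k))) = 0 := by
      have h2 := succ_nsmul ((f Finset.univ - f S)
          - ∑ k ∈ Finset.univ \ S, (f Finset.univ - f (Finset.univ.erase k))) (m + 1)
      rw [hv] at h2
      exact add_eq_right.mp h2.symm
    exact sub_eq_zero.mp (htf (m + 1) _ (Nat.succ_pos _) hz)

theorem claim_up {G : Type*} [AddCommGroup G] {n : ℕ}
    (f : Finset (Fin n) → G) (u : Fin n → G)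
    (hf0 : f ∅ = 0)
    (hkey1 : ∀ (i : Fin n) (J : Finset (Fin n)), i ∉ J → f (J ∪ {i}) - f J = u i) :
    ∀ S : Finset (Fin n), f S = ∑ i ∈ S, u i := by
  classical
  intro S
  induction S using Finset.induction_on with
  | empty => simpa using hf0
  | @insert a S ha ih =>
    have h := hkey1 a S ha
    rw [Finset.union_comm, ← Finset.insert_eq] at h
    rw [Finset.sum_insert ha, ← ih, ← h]
    abel

/-- If `G` is torsion-free, the following are equivalent:
(1) `X₁, …, X_n` are mutually `F`-independent given `Y`;
(2) `Y.TC_F(X₁; …; X_n) = 0`;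
(3) `(Y·X_{[n]∖I}).TC_F(;_{i∈I} Xᵢ) = 0` for all nonempty `I ⊆ [n]`. -/
theorem mutual_F_independence_iff_TC
    {M G : Type*} [CommMonoid M] [AddCommGroup G]
    (hidem : ∀ x : M, x * x = x)
    (htf : ∀ (k : ℕ) (g : G), 0 < k → k • g = 0 → g = 0)
    (A : MAction M G) (F : M → G) (hF : ChainRule A F)
    (n : ℕ) (X : Fin n → M) (Y : M) :
    List.TFAE
      [ ∀ i : Fin n, Findep A F (X i) (∏ j ∈ Finset.univ.erase i, X j) Y,
        A.act Y (TC F X (Finset.univ : Finset (Fin n))) = 0,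
        ∀ I : Finset (Fin n), I.Nonempty →
          A.act (Y * ∏ a ∈ Finset.univ \ I, X a) (TC F X I) = 0 ] := by
  classical
  set f : Finset (Fin n) → G := fun S => A.act Y (F (∏ i ∈ S, X i)) with hfdef
  have hactsub : ∀ (Z : M) (g h : G), A.act Z (g - h) = A.act Z g - A.act Z h :=
    fun Z g h => map_sub (A.hom Z) g h
  have hactsum : ∀ (Z : M) (s : Finset (Fin n)) (g : Fin n → G),
      A.act Z (∑ i ∈ s, g i) = ∑ i ∈ s, A.act Z (g i) :=
    fun Z s g => map_sum (A.hom Z) g s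
  have hf0 : f ∅ = 0 := by
    simp only [hfdef, Finset.prod_empty]
    rw [F_one' A F hF]
    exact map_zero (A.hom Y)
  have hkey : ∀ K S : Finset (Fin n),
      A.act (Y * ∏ i ∈ K, X i) (F (∏ i ∈ S, X i)) = f (K ∪ S) - f K := by
    intro K S
    simp only [hfdef]
    rw [← A.act_mul, act_prod_F A F hF hidem X K S, hactsub]
  have hstep : ∀ (S : Finset (Fin n)) (i : Fin n), i ∈ S → f (S ∪ {i}) = f S := by
    intro S i hi
    rw [Finset.union_eq_left.mpr (Finset.singleton_subset_iff.mpr hi)]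
  have hexp : ∀ (K I : Finset (Fin n)),
      A.act (Y * ∏ a ∈ K, X a) (TC F X I)
        = (∑ i ∈ I, (f (K ∪ {i}) - f K)) - (f (K ∪ I) - f K) := by
    intro K I
    show A.act (Y * ∏ a ∈ K, X a) ((∑ l ∈ I, F (X l)) - F (∏ l ∈ I, X l)) = _
    rw [hactsub, hactsum, ← hkey K I]
    congr 1
    apply Finset.sum_congr rfl
    intro i _
    rw [← hkey K {i}, Finset.prod_singleton]
  have hSt1 : ∀ i : Fin n,
      Findep A F (X i) (∏ j ∈ Finset.univ.erase i, X j) Y ↔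
        f {i} - (f Finset.univ - f (Finset.univ.erase i)) = 0 := by
    intro i
    have hu : Finset.univ.erase i ∪ {i} = (Finset.univ : Finset (Fin n)) := by
      rw [Finset.union_comm, ← Finset.insert_eq, Finset.insert_erase (Finset.mem_univ i)]
    show A.act Y (F (X i) - A.act (∏ j ∈ Finset.univ.erase i, X j) (F (X i))) = 0 ↔ _
    rw [hactsub, A.act_mul,
      show F (X i) = F (∏ j ∈ ({i} : Finset (Fin n)), X j) by rw [Finset.prod_singleton],
      hkey (Finset.univ.erase i) {i}, hu]
  have hSt2 : A.act Y (TC F X (Finset.univ : Finset (Fin n)))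
      = (∑ i : Fin n, f {i}) - f Finset.univ := by
    have h := hexp ∅ Finset.univ
    rw [Finset.prod_empty, mul_one] at h
    rw [h]
    simp [hf0]
  have hHof : A.act Y (TC F X (Finset.univ : Finset (Fin n))) = 0 →
      ∀ K : Finset (Fin n), (∑ i : Fin n, (f (K ∪ {i}) - f K)) = f Finset.univ - f K := by
    intro h2 K
    have h0 : A.act (Y * ∏ a ∈ K, X a) (TC F X (Finset.univ : Finset (Fin n))) = 0 := by
      rw [mul_comm, ← A.act_mul, h2]
      exact map_zero (A.hom _)
    have h1 := hexp K Finset.univ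
    rw [h0, show K ∪ (Finset.univ : Finset (Fin n)) = Finset.univ from
      Finset.union_eq_right.mpr (Finset.subset_univ K)] at h1
    exact sub_eq_zero.mp h1.symm
  tfae_have 1 → 2 := by
    intro h1
    have hkey1 : ∀ (i : Fin n) (J : Finset (Fin n)), i ∉ J →
        f (J ∪ {i}) - f J = f Finset.univ - f (Finset.univ.erase i) := by
      intro i J hiJ
      have hJE : J ∪ Finset.univ.erase i = Finset.univ.erase i :=
        Finset.union_eq_right.mpr
          (Finset.subset_erase.mpr ⟨Finset.subset_univ J, hiJ⟩)
      have h := h1 i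
      have h' : A.act (∏ a ∈ J, X a)
          (A.act Y (F (X i) - A.act (∏ j ∈ Finset.univ.erase i, X j) (F (X i)))) = 0 := by
        rw [h]
        exact map_zero (A.hom _)
      rw [A.act_mul, mul_comm (∏ a ∈ J, X a) Y, hactsub, A.act_mul,
        mul_assoc, prod_union_idem hidem X J (Finset.univ.erase i), hJE,
        show F (X i) = F (∏ j ∈ ({i} : Finset (Fin n)), X j) by rw [Finset.prod_singleton],
        hkey J {i}, hkey (Finset.univ.erase i) {i},
        show Finset.univ.erase i ∪ {i} = (Finset.univ : Finset (Fin n)) by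
          rw [Finset.union_comm, ← Finset.insert_eq, Finset.insert_erase (Finset.mem_univ i)]]
        at h'
      exact sub_eq_zero.mp h'
    have hsing : ∀ i : Fin n, f {i} = f Finset.univ - f (Finset.univ.erase i) := by
      intro i
      have h := hkey1 i ∅ (Finset.notMem_empty i)
      rwa [Finset.empty_union, hf0, sub_zero] at h
    have hU := claim_up f (fun i => f Finset.univ - f (Finset.univ.erase i)) hf0 hkey1
      Finset.univ
    rw [hSt2, Finset.sum_congr rfl (fun i _ => hsing i), ← hU, sub_self]
  tfae_have 2 → 3 := by
    intro h2 I hI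
    have hH := hHof h2
    rw [hexp (Finset.univ \ I) I, Finset.sdiff_union_of_subset (Finset.subset_univ I)]
    have hsub : ∑ i ∈ I, (f ((Finset.univ \ I) ∪ {i}) - f (Finset.univ \ I))
        = ∑ i : Fin n, (f ((Finset.univ \ I) ∪ {i}) - f (Finset.univ \ I)) := by
      apply Finset.sum_subset (Finset.subset_univ I)
      intro x _ hx
      have hxm : x ∈ Finset.univ \ I := Finset.mem_sdiff.mpr ⟨Finset.mem_univ x, hx⟩
      rw [hstep _ x hxm, sub_self]
    rw [hsub, hH (Finset.univ \ I), sub_self]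
  tfae_have 3 → 2 := by
    intro h3
    rcases Nat.eq_zero_or_pos n with hn | hn
    · subst hn
      rw [hSt2]
      simp [Finset.univ_eq_empty, hf0]
    · have : Nonempty (Fin n) := ⟨⟨0, hn⟩⟩
      have h := h3 Finset.univ Finset.univ_nonempty
      rwa [Finset.sdiff_self, Finset.prod_empty, mul_one] at h
  tfae_have 2 → 1 := by
    intro h2 i
    rw [hSt1 i]
    have hclaim := claim_down htf f hstep (hHof h2)
    have hA := hclaim {i}
    have hB := hclaim ∅
    rw [hf0, sub_zero, Finset.sdiff_empty] at hB
    rw [← Finset.erase_eq, Finset.sum_erase_eq_sub (Finset.mem_univ i), ← hB] at hA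
    have hkeyi : f {i} = f Finset.univ - f (Finset.univ.erase i) := sub_right_injective hA
    rw [hkeyi, sub_self]
  tfae_finish

end AMRF
end

section
/- Let Ω be a finite sample space, S a finite set, and X_1, …, X_n : Ω → S random variables whose joint map (X_1, …, X_n) : Ω → S^n is surjective. Let P : Ω → [0, 1] be a probability mass function such that X_1, …, X_n form a P-Markov chain, and suppose there is a doubly stochastic matrix T = (T(x' | x))_{x, x' ∈ S} such that P(x_i | x_{i−1}) = T(x_i | x_{i−1}) for all i = 2, …, n and all x_{i−1}, x_i ∈ S with P(x_{i−1}) ≠ 0. Then for all i = 2, …, n: H_P(X_{i−1}) ≤ H_P(X_i), i.e. the Shannon entropy cannot decrease along the chain. -/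
namespace AMRF
/-- The probability of the event `E` under the mass function `P`. -/
noncomputable def pr {Ω : Type*} [Fintype Ω] (P : Ω → ℝ) (E : Ω → Prop) [DecidablePred E] : ℝ :=
  ∑ ω : Ω, if E ω then P ω else 0

open scoped Classical in
/-- `U` and `V` are `P`-independent given `W`:
`P(u, v, w) = P(u | w) · P(v, w)` for all values, where the right-hand side is
interpreted as `0` when `P(w) = 0`. -/
def CondIndep {Ω α β γ : Type*} [Fintype Ω] [DecidableEq α] [DecidableEq β] [DecidableEq γ]
    (P : Ω → ℝ) (U : Ω → α) (V : Ω → β) (W : Ω → γ) : Prop :=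
  ∀ (u : α) (v : β) (w : γ),
    pr P (fun ω => U ω = u ∧ V ω = v ∧ W ω = w) =
      (if pr P (fun ω => W ω = w) = 0 then 0
        else pr P (fun ω => U ω = u ∧ W ω = w) / pr P (fun ω => W ω = w)) *
      pr P (fun ω => V ω = v ∧ W ω = w)

/-- Shannon entropy `H_P(X) = −Σ_x P(x) log P(x)` (with `0·log 0 = 0`, which holds
automatically since `Real.log 0 = 0`). -/
noncomputable def entropy {Ω S : Type*} [Fintype Ω] [DecidableEq S] [Fintype S]
    (P : Ω → ℝ) (X : Ω → S) : ℝ :=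
  - ∑ x : S, pr P (fun ω => X ω = x) * Real.log (pr P (fun ω => X ω = x))

open scoped Classical in
/-- `X₁, …, X_n` form a `P`-Markov chain: `Xᵢ ⊥_P (X₁, …, X_{i−2}) | X_{i−1}` for all
`2 ≤ i ≤ n` (with `0`-based indices: for consecutive `j + 1 = i`, `Xᵢ` is `P`-independent of
the joint variable of all `X_k` with `k < j`, given `X_j`). -/
def PMarkovChain {Ω S : Type*} [Fintype Ω] [DecidableEq S] {n : ℕ}
    (P : Ω → ℝ) (X : Fin n → Ω → S) : Prop :=
  ∀ i j : Fin n, (j : ℕ) + 1 = (i : ℕ) →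
    CondIndep P (X i) (fun ω => fun k : Fin (j : ℕ) => X (Fin.castLE j.isLt.le k) ω) (X j)

/-- a weak second law of thermodynamics. Let `X₁, …, X_n : Ω → S` have a
surjective joint map, let `P` be a probability mass function making `X₁, …, X_n` a
`P`-Markov chain, and suppose the transition probabilities are given by a time-independent
doubly stochastic matrix `T`. Then the Shannon entropy cannot decrease along the chain:
`H_P(X_{i−1}) ≤ H_P(Xᵢ)` for all `i = 2, …, n`. -/
theorem second_law_of_thermodynamics
    {Ω S : Type*} [Fintype Ω] [Fintype S] [DecidableEq S]
    (n : ℕ) (X : Fin n → Ω → S)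
    (hsurj : Function.Surjective (fun (ω : Ω) (i : Fin n) => X i ω))
    (P : Ω → ℝ) (hP0 : ∀ ω, 0 ≤ P ω) (hP1 : ∑ ω : Ω, P ω = 1)
    (hmc : PMarkovChain P X)
    (T : S → S → ℝ)
    (hT0 : ∀ x x' : S, 0 ≤ T x x')
    (hTrow : ∀ x : S, ∑ x' : S, T x x' = 1)
    (hTcol : ∀ x' : S, ∑ x : S, T x x' = 1)
    (hTP : ∀ i j : Fin n, (j : ℕ) + 1 = (i : ℕ) → ∀ x x' : S,
      pr P (fun ω => X j ω = x) ≠ 0 →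
      pr P (fun ω => X i ω = x' ∧ X j ω = x) / pr P (fun ω => X j ω = x) = T x x') :
    ∀ i j : Fin n, (j : ℕ) + 1 = (i : ℕ) → entropy P (X j) ≤ entropy P (X i) := by
  intro i j hij
  classical
  set p : S → ℝ := fun x => pr P (fun ω => X j ω = x) with hp
  have hpnn : ∀ x, 0 ≤ p x := fun x =>
    Finset.sum_nonneg fun ω _ => by split <;> simp [hP0 ω]
  have hjointnn : ∀ x x', 0 ≤ pr P (fun ω => X i ω = x' ∧ X j ω = x) := fun x x' =>
    Finset.sum_nonneg fun ω _ => by split <;> simp [hP0 ω]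
  have hjoint : ∀ x x', pr P (fun ω => X i ω = x' ∧ X j ω = x) = T x x' * p x := by
    intro x x'
    by_cases h : p x = 0
    · have hle : pr P (fun ω => X i ω = x' ∧ X j ω = x) ≤ p x := by
        apply Finset.sum_le_sum
        intro ω _
        by_cases h1 : X i ω = x' ∧ X j ω = x
        · simp [h1, h1.2]
        · simp only [h1, if_false]
          split <;> simp [hP0 ω]
      have := hjointnn x x'
      rw [h]; rw [h] at hle
      linarith [mul_nonneg (hT0 x x') (le_refl (0:ℝ))]
    · have := hTP i j hij x x' h
      rw [div_eq_iff h] at this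
      exact this
  have hmarg : ∀ x', pr P (fun ω => X i ω = x') = ∑ x, T x x' * p x := by
    intro x'
    have : ∀ x, T x x' * p x = pr P (fun ω => X i ω = x' ∧ X j ω = x) :=
      fun x => (hjoint x x').symm
    simp_rw [this]
    unfold pr
    rw [Finset.sum_comm]
    congr 1
    ext ω
    simp [ite_and, Finset.sum_ite_eq]
  have hent : ∀ (Y : Ω → S), entropy P Y = ∑ x : S, Real.negMulLog (pr P (fun ω => Y ω = x)) := by
    intro Y
    unfold entropy
    rw [← Finset.sum_neg_distrib]
    congr 1; ext x; rw [Real.negMulLog]; ring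
  rw [hent (X j), hent (X i)]
  calc ∑ x : S, Real.negMulLog (p x)
      = ∑ x : S, (∑ x' : S, T x x') * Real.negMulLog (p x) := by
        simp [hTrow]
    _ = ∑ x' : S, ∑ x : S, T x x' • Real.negMulLog (p x) := by
        rw [Finset.sum_comm]
        congr 1; ext x
        rw [Finset.sum_mul]
        simp only [smul_eq_mul]
    _ ≤ ∑ x' : S, Real.negMulLog (∑ x : S, T x x' • p x) := by
        apply Finset.sum_le_sum
        intro x' _
        exact Real.concaveOn_negMulLog.le_map_sum (fun x _ => hT0 x x')
          (hTcol x') (fun x _ => hpnn x)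
    _ = ∑ x' : S, Real.negMulLog (pr P (fun ω => X i ω = x')) := by
        congr 1; ext x'
        rw [hmarg x']
        simp [smul_eq_mul]


end AMRF
end
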